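/- (Cauchy determinant) For x₁,…,xₙ and y₁,…,yₙ in a field with xᵢyⱼ ≠ 1 for all i,j, det(1/(1-xᵢyⱼ))_{1≤i,j≤n} = ∏_{1≤i<j≤n}(xᵢ-xⱼ)(yᵢ-yⱼ) / ∏_{i,j=1}^n (1-xᵢyⱼ). -/

import Mathlib

/-!
Taking the Schur complement of the `(0, 0)` entry of the matrix `(1 / (1 - xᵢ yⱼ))` gives, by the
identity
`1/(1 - a b) - (1 - a₀ b₀) / ((1 - a b₀)(1 - a₀ b)) = (a - a₀)(b - b₀) / ((1 - a b)(1 - a b₀)(1 - a₀ b))`,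
the same kind of matrix in the remaining variables, with its rows and columns rescaled. Induction on
`n` then produces the product formula.
-/

open Finset Matrix

theorem Finset.prod_filter_fst_lt_snd {ι M : Type*} [Fintype ι] [LinearOrder ι]
    [LocallyFiniteOrderTop ι] [CommMonoid M] (f : ι → ι → M) :
    ∏ p ∈ univ.filter (fun p : ι × ι => p.1 < p.2), f p.1 p.2 = ∏ i, ∏ j ∈ Ioi i, f i j := by
  rw [prod_filter, Fintype.prod_prod_type]
  refine prod_congr rfl fun i _ => ?_
  rw [← prod_filter]
  congr 1
  ext j
  simp

theorem Matrix.det_succ_eq_mul_det_schurComplement {R : Type*} [Field R] {n : ℕ}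
    (A : Matrix (Fin (n + 1)) (Fin (n + 1)) R) (h : A 0 0 ≠ 0) :
    A.det = A 0 0 *
      (of fun i j : Fin n => A i.succ j.succ - A i.succ 0 * A 0 j.succ / A 0 0).det := by
  let c : Fin (n + 1) → R := Fin.cases 0 fun i => A i.succ 0 / A 0 0
  let B : Matrix (Fin (n + 1)) (Fin (n + 1)) R := of fun i j => A i j - c i * A 0 j
  have hB_zero_row : ∀ j, B 0 j = A 0 j := by simp [B, c]
  have hdet : A.det = B.det :=
    det_eq_of_forall_row_eq_smul_add_const c 0 rfl fun i j => by rw [hB_zero_row]; simp [B]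
  have hB_zero_col : ∀ i : Fin n, B i.succ 0 = 0 := fun i => by simp [B, c, h]
  rw [hdet, det_succ_column_zero, Fin.sum_univ_succ]
  simp only [hB_zero_col, mul_zero, zero_mul, sum_const_zero, add_zero, Fin.val_zero, pow_zero,
    one_mul, hB_zero_row, Fin.succAbove_zero]
  congr 2
  ext i j
  simp [B, c, div_mul_eq_mul_div]

section Cauchy

variable {K : Type*} [Field K]

def cauchyMatrix {m n : Type*} (x : m → K) (y : n → K) : Matrix m n K :=
  of fun i j => 1 / (1 - x i * y j)

theorem one_div_one_sub_mul_schurComplement {a a₀ b b₀ : K} (h : 1 - a * b ≠ 0)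
    (ha : 1 - a * b₀ ≠ 0) (hb : 1 - a₀ * b ≠ 0) :
    1 / (1 - a * b) - 1 / (1 - a * b₀) * (1 / (1 - a₀ * b)) / (1 / (1 - a₀ * b₀)) =
      (a - a₀) / (1 - a * b₀) * ((b - b₀) / (1 - a₀ * b) * (1 / (1 - a * b))) := by
  have hb' : 1 - b * a₀ ≠ 0 := by rwa [mul_comm]
  field_simp
  ring

theorem det_cauchyMatrix_succ {n : ℕ} (x y : Fin (n + 1) → K) (h : ∀ i j, 1 - x i * y j ≠ 0) :
    (cauchyMatrix x y).det = 1 / (1 - x 0 * y 0) *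
      ((∏ i : Fin n, (x i.succ - x 0) / (1 - x i.succ * y 0)) *
        ((∏ j : Fin n, (y j.succ - y 0) / (1 - x 0 * y j.succ)) *
          (cauchyMatrix (x ∘ Fin.succ) (y ∘ Fin.succ)).det)) := by
  rw [det_succ_eq_mul_det_schurComplement _ (one_div_ne_zero (h 0 0)), ← det_mul_row,
    ← det_mul_column]
  congr 2
  ext i j
  exact one_div_one_sub_mul_schurComplement (h _ _) (h _ _) (h _ _)

theorem det_cauchyMatrix_mul_prod {n : ℕ} (x y : Fin n → K) (h : ∀ i j, 1 - x i * y j ≠ 0) :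
    (cauchyMatrix x y).det * ∏ i, ∏ j, (1 - x i * y j) =
      ∏ i, ∏ j ∈ Ioi i, (x i - x j) * (y i - y j) := by
  induction n with
  | zero => simp
  | succ n ih =>
    have ih' := ih (x ∘ Fin.succ) (y ∘ Fin.succ) fun i j => h _ _
    simp only [Function.comp_apply] at ih'
    have hfirst : ∏ j : Fin n, (x 0 - x j.succ) * (y 0 - y j.succ) =
        (∏ j : Fin n, (x j.succ - x 0)) * ∏ j : Fin n, (y j.succ - y 0) := by
      rw [← prod_mul_distrib]
      exact prod_congr rfl fun j _ => by ring
    rw [det_cauchyMatrix_succ x y h]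
    simp only [Fin.prod_univ_succ, Fin.prod_Ioi_zero, Fin.prod_Ioi_succ, prod_div_distrib, hfirst]
    rw [prod_mul_distrib (f := fun i : Fin n => 1 - x i.succ * y 0), ← ih']
    have hP : ∏ j : Fin n, (1 - x 0 * y j.succ) ≠ 0 := prod_ne_zero_iff.2 fun j _ => h _ _
    have hQ : ∏ i : Fin n, (1 - x i.succ * y 0) ≠ 0 := prod_ne_zero_iff.2 fun i _ => h _ _
    have h₀ := h 0 0
    generalize ∏ j : Fin n, (1 - x 0 * y j.succ) = P at hP ⊢
    generalize ∏ i : Fin n, (1 - x i.succ * y 0) = Q at hQ ⊢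
    field_simp

end Cauchy

/-- the Cauchy determinant with kernel `1/(1-xy)`. -/
theorem stmt4 (n : ℕ) {K : Type*} [Field K] (x y : Fin n → K)
    (h : ∀ i j, 1 - x i * y j ≠ 0) :
    Matrix.det (Matrix.of fun i j : Fin n => 1 / (1 - x i * y j)) =
      (∏ p ∈ Finset.univ.filter (fun p : Fin n × Fin n => p.1 < p.2),
          (x p.1 - x p.2) * (y p.1 - y p.2)) /
        ∏ i, ∏ j, (1 - x i * y j) := by
  have hprod : ∏ i, ∏ j, (1 - x i * y j) ≠ 0 :=
    prod_ne_zero_iff.2 fun i _ => prod_ne_zero_iff.2 fun j _ => h i j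
  rw [eq_div_iff hprod, prod_filter_fst_lt_snd fun i j => (x i - x j) * (y i - y j)]
  exact det_cauchyMatrix_mul_prod x y h
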